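/- Let k be a field of characteristic zero, B a unital associative k-algebra, and f ∈ B a unit such that ad(f) is locally nilpotent on B. For x ∈ k define Θ^x : B → B by Θ^x(u) = Σ_{i≥0} C(x,i)·(ad f)^i(u)·f^{−i}, where C(x,0) = 1 and C(x,i) = x(x−1)⋯(x−i+1)/i! for i ≥ 1; by local nilpotency this sum is finite for each u. Then Θ^x is a unital k-algebra endomorphism of B: it is k-linear, multiplicative, and Θ^x(1) = 1. -/

import Mathlib

/-!
Let `σ = u ↦ f u f⁻¹`. Then `σ = 1 + D` with `D u = (ad f)(u) f⁻¹`, and `Dⁱ u = (ad f)ⁱ(u) f⁻ⁱ`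
because `ad f` commutes with right multiplication by `f⁻¹`; so `Θ^x = Σ C(x,i) Dⁱ` is the binomial
series of `(1 + D)^x`. For `x = n ∈ ℕ` the binomial theorem gives `Θ^n = σⁿ`, which is
multiplicative. For fixed `u, v`, both `Θ^x(uv)` and `Θ^x(u) Θ^x(v)` are polynomial in `x` with
coefficients in `B`; they agree on the infinite set `ℕ ⊆ k`, hence for every `x` (test against
linear functionals on `B`).
-/

/-- The generalized binomial coefficient `C(x, i) = x(x-1)⋯(x-i+1)/i!` of a field element
`x` (with `C(x, 0) = 1`). -/
noncomputable def genBinom (k : Type*) [Field k] (x : k) (i : ℕ) : k :=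
  (∏ j ∈ Finset.range i, (x - (j : k))) / (Nat.factorial i : k)

open Finset Polynomial LinearMap

section GenBinom

variable (k : Type*) [Field k]

noncomputable def genBinomPoly (i : ℕ) : k[X] :=
  C (i.factorial : k)⁻¹ * descPochhammer k i

variable {k}

theorem eval_genBinomPoly (x : k) (i : ℕ) : (genBinomPoly k i).eval x = genBinom k x i := by
  rw [genBinomPoly, eval_mul, eval_C, descPochhammer_eval_eq_prod_range, genBinom,
    div_eq_inv_mul]

theorem genBinom_natCast [CharZero k] (n i : ℕ) : genBinom k n i = n.choose i := by
  rw [Nat.cast_choose_eq_descPochhammer_div, descPochhammer_eval_eq_prod_range, genBinom]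

end GenBinom

theorem Module.Dual.apply_sum_eval_smul {k V ι : Type*} [Field k] [AddCommGroup V] [Module k V]
    (φ : Module.Dual k V) (s : Finset ι) (P : ι → k[X]) (a : ι → V) (y : k) :
    φ (∑ i ∈ s, (P i).eval y • a i) = (∑ i ∈ s, C (φ (a i)) * P i).eval y := by
  simp [eval_finsetSum, mul_comm]

theorem Polynomial.sum_eval_smul_eq_of_infinite {k V ι κ : Type*} [Field k] [AddCommGroup V]
    [Module k V] {S : Set k} (hS : S.Infinite) (s : Finset ι) (P : ι → k[X]) (a : ι → V)
    (t : Finset κ) (Q : κ → k[X]) (b : κ → V)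
    (h : ∀ y ∈ S, ∑ i ∈ s, (P i).eval y • a i = ∑ j ∈ t, (Q j).eval y • b j) (x : k) :
    ∑ i ∈ s, (P i).eval x • a i = ∑ j ∈ t, (Q j).eval x • b j := by
  refine Module.eval_apply_injective k (LinearMap.ext fun φ => ?_)
  simp only [Module.Dual.eval_apply, Module.Dual.apply_sum_eval_smul]
  congr 1
  refine Polynomial.eq_of_infinite_eval_eq _ _ (hS.mono fun y hy => ?_)
  simpa only [Set.mem_ofPred_eq, ← Module.Dual.apply_sum_eval_smul] using congr(φ $(h y hy))

section Twist

variable (k : Type*) [Field k] {B : Type*} [Ring B] [Algebra k B] (f : Bˣ)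

def conjEnd : Module.End k B := mulLeft k (f : B) * mulRight k (↑f⁻¹ : B)

variable {k}

theorem conjEnd_pow (n : ℕ) : conjEnd k f ^ n = conjEnd k (f ^ n) := by
  rw [conjEnd, (commute_mulLeft_right _ _).mul_pow, pow_mulLeft, pow_mulRight, conjEnd,
    ← inv_pow, Units.val_pow_eq_pow_val, Units.val_pow_eq_pow_val]

theorem conjEnd_apply_mul (u v : B) :
    conjEnd k f (u * v) = conjEnd k f u * conjEnd k f v := by
  simp [conjEnd, mul_assoc]

theorem mulLeft_sub_mulRight_pow_apply (a u : B) (n : ℕ) :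
    ((mulLeft k a - mulRight k a) ^ n) u = (fun b => a * b - b * a)^[n] u := by
  rw [Module.End.coe_pow]
  rfl

theorem conjEnd_sub_one_pow_apply (n : ℕ) (u : B) :
    ((conjEnd k f - 1) ^ n) u =
      ((mulLeft k (f : B) - mulRight k (f : B)) ^ n) u * (↑f⁻¹ : B) ^ n := by
  have h_eq : conjEnd k f - 1 =
      mulRight k (↑f⁻¹ : B) * (mulLeft k (f : B) - mulRight k (f : B)) := by
    ext u
    simp [conjEnd, sub_mul, mul_assoc]
  have h_comm : Commute (mulRight k (↑f⁻¹ : B)) (mulLeft k (f : B) - mulRight k (f : B)) := by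
    ext u
    simp [sub_mul, mul_sub, mul_assoc]
  rw [h_eq, h_comm.mul_pow, pow_mulRight]
  rfl

theorem conjEnd_sub_one_pow_apply_eq_zero {u : B} {N : ℕ}
    (h : ((mulLeft k (f : B) - mulRight k (f : B)) ^ N) u = 0) :
    ((conjEnd k f - 1) ^ N) u = 0 := by
  rw [conjEnd_sub_one_pow_apply, h, zero_mul]

end Twist

section Theta

variable {k : Type*} [Field k] {B : Type*} [Ring B] [Algebra k B]

/-- `((conjEnd k f - 1) ^ i) u = (ad f)^i(u) f⁻ⁱ`, so this is the paper's `Θ^x`. The `finsum` is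
junk (`0`) unless the support is finite, which local nilpotency of `ad f` guarantees. -/
noncomputable def theta (f : Bˣ) (x : k) (u : B) : B :=
  ∑ᶠ i, genBinom k x i • ((conjEnd k f - 1) ^ i) u

variable {f : Bˣ}

theorem theta_eq_sum_range (x : k) {u : B} {N : ℕ} (h : ((conjEnd k f - 1) ^ N) u = 0) :
    theta f x u = ∑ i ∈ range N, genBinom k x i • ((conjEnd k f - 1) ^ i) u := by
  refine finsum_eq_finsetSum_of_support_subset _ fun i hi => ?_
  by_contra hiN
  rw [Function.mem_support, Module.End.pow_map_zero_of_le (by simpa using hiN) h,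
    smul_zero] at hi
  exact hi rfl

theorem theta_natCast [CharZero k] (n : ℕ) (u : B) :
    theta f (n : k) u = conjEnd k (f ^ n) u := by
  have h_binom : conjEnd k f ^ n = ∑ i ∈ range (n + 1),
      (conjEnd k f - 1) ^ i * 1 ^ (n - i) * (n.choose i : Module.End k B) := by
    simpa using (Commute.one_right (conjEnd k f - 1)).add_pow n
  rw [← conjEnd_pow, h_binom, theta,
    finsum_eq_finsetSum_of_support_subset (s := range (n + 1))]
  · simp only [genBinom_natCast, Nat.cast_smul_eq_nsmul, LinearMap.sum_apply, one_pow, mul_one,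
      Module.End.mul_apply, Module.End.natCast_apply, map_nsmul]
  · intro i hi
    by_contra hin
    exact hi (by simp [genBinom_natCast, Nat.choose_eq_zero_of_lt (by simpa using hin)])

theorem theta_one (x : k) : theta f x 1 = 1 := by
  have h : ((conjEnd k f - 1 : Module.End k B) ^ 1) 1 = 0 := by simp [conjEnd]
  simp [theta_eq_sum_range x h, genBinom]

theorem theta_add (x : k) {u v : B} {N M : ℕ} (hu : ((conjEnd k f - 1) ^ N) u = 0)
    (hv : ((conjEnd k f - 1) ^ M) v = 0) : theta f x (u + v) = theta f x u + theta f x v := by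
  have hu' := Module.End.pow_map_zero_of_le (Nat.le_add_right N M) hu
  have hv' := Module.End.pow_map_zero_of_le (Nat.le_add_left M N) hv
  have huv : ((conjEnd k f - 1) ^ (N + M)) (u + v) = 0 := by rw [map_add, hu', hv', add_zero]
  rw [theta_eq_sum_range x huv, theta_eq_sum_range x hu', theta_eq_sum_range x hv',
    ← sum_add_distrib]
  simp only [map_add, smul_add]

theorem theta_smul (x c : k) {u : B} {N : ℕ} (hu : ((conjEnd k f - 1) ^ N) u = 0) :
    theta f x (c • u) = c • theta f x u := by
  have hcu : ((conjEnd k f - 1) ^ N) (c • u) = 0 := by rw [map_smul, hu, smul_zero]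
  rw [theta_eq_sum_range x hcu, theta_eq_sum_range x hu, smul_sum]
  simp only [map_smul, smul_comm c]

theorem theta_mul [CharZero k] (x : k) {u v : B} {N M L : ℕ}
    (hu : ((conjEnd k f - 1) ^ N) u = 0) (hv : ((conjEnd k f - 1) ^ M) v = 0)
    (huv : ((conjEnd k f - 1) ^ L) (u * v) = 0) :
    theta f x (u * v) = theta f x u * theta f x v := by
  have h_left : ∀ y : k, theta f y (u * v) =
      ∑ i ∈ range L, (genBinomPoly k i).eval y • ((conjEnd k f - 1) ^ i) (u * v) := by
    simpa only [eval_genBinomPoly] using fun y => theta_eq_sum_range y huv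
  have h_right : ∀ y : k, theta f y u * theta f y v =
      ∑ p ∈ range N ×ˢ range M, (genBinomPoly k p.1 * genBinomPoly k p.2).eval y •
        (((conjEnd k f - 1) ^ p.1) u * ((conjEnd k f - 1) ^ p.2) v) := by
    intro y
    rw [theta_eq_sum_range y hu, theta_eq_sum_range y hv, sum_mul_sum, sum_product]
    simp only [eval_mul, eval_genBinomPoly, smul_mul_smul_comm]
  rw [h_left, h_right]
  refine sum_eval_smul_eq_of_infinite (Set.infinite_range_of_injective Nat.cast_injective)
    _ _ _ _ _ _ ?_ x
  rintro _ ⟨n, rfl⟩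
  rw [← h_left, ← h_right, theta_natCast, theta_natCast, theta_natCast]
  exact conjEnd_apply_mul _ u v

variable [CharZero k] (f)

noncomputable def thetaAlgHom
    (hnil : ∀ u : B, ∃ N : ℕ, ((mulLeft k (f : B) - mulRight k (f : B)) ^ N) u = 0) (x : k) :
    B →ₐ[k] B :=
  have hD (u : B) : ∃ N : ℕ, ((conjEnd k f - 1) ^ N) u = 0 :=
    (hnil u).imp fun _ => conjEnd_sub_one_pow_apply_eq_zero f
  AlgHom.ofLinearMap
    { toFun := theta f x
      map_add' := fun u v => theta_add x (hD u).choose_spec (hD v).choose_spec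
      map_smul' := fun c u => theta_smul x c (hD u).choose_spec }
    (theta_one x)
    (fun u v => theta_mul x (hD u).choose_spec (hD v).choose_spec (hD (u * v)).choose_spec)

theorem thetaAlgHom_apply
    (hnil : ∀ u : B, ∃ N : ℕ, ((mulLeft k (f : B) - mulRight k (f : B)) ^ N) u = 0)
    (x : k) (u : B) : thetaAlgHom f hnil x u = theta f x u := rfl

end Theta

theorem stmt_8 (k : Type*) [Field k] [CharZero k] (B : Type*) [Ring B] [Algebra k B]
    (f : Bˣ)
    (hnil : ∀ u : B, ∃ N : ℕ, (fun a => (f : B) * a - a * (f : B))^[N] u = 0)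
    (x : k) :
    ∃ Θ : B →ₐ[k] B, ∀ (u : B) (N : ℕ),
      (fun a => (f : B) * a - a * (f : B))^[N] u = 0 →
      Θ u = ∑ i ∈ Finset.range N,
        genBinom k x i •
          ((fun a => (f : B) * a - a * (f : B))^[i] u * ((f⁻¹ : Bˣ) : B) ^ i) := by
  simp only [← mulLeft_sub_mulRight_pow_apply (k := k)] at hnil ⊢
  refine ⟨thetaAlgHom f hnil x, fun u N hN => ?_⟩
  rw [thetaAlgHom_apply, theta_eq_sum_range x (conjEnd_sub_one_pow_apply_eq_zero f hN)]
  simp only [conjEnd_sub_one_pow_apply]
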